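/- arXiv:nlin/0612042 — 6 statements merged into one kernel-verified Lean document; each statement's English description precedes it below -/
import Mathlib

section
/- Let Λ be an invertible n×n real matrix whose last row consists entirely of 1's. Then for every column index i there exists a row index h with h < n such that the (n-1)×(n-1) submatrix obtained from Λ by deleting row h and column i has nonzero determinant. -/
open Matrix BigOperators

/-- The submatrix of `M` obtained by deleting row `h` and column `i`. -/
def delMinor {n : ℕ} (M : Matrix (Fin (n+1)) (Fin (n+1)) ℝ) (h i : Fin (n+1)) :
    Matrix (Fin n) (Fin n) ℝ :=
  M.submatrix h.succAbove i.succAbove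

/-- if Λ is invertible with last row all 1's, then for every column i
there is a row h strictly before the last one whose complementary minor is nonzero. -/
theorem stmt0 {n : ℕ} (hn : 1 ≤ n) (Λ : Matrix (Fin (n+1)) (Fin (n+1)) ℝ)
    (hdet : Λ.det ≠ 0) (hlast : ∀ j, Λ (Fin.last n) j = 1) (i : Fin (n+1)) :
    ∃ h : Fin (n+1), h < Fin.last n ∧ (delMinor Λ h i).det ≠ 0 := by
  by_contra hcon
  push_neg at hcon
  have hzero : ∀ h : Fin (n+1), h ≠ Fin.last n → (delMinor Λ h i).det = 0 := by
    intro h hne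
    exact hcon h (lt_of_le_of_ne (Fin.le_last h) hne)
  -- pick a column j ≠ i
  obtain ⟨j, hj⟩ : ∃ j : Fin (n+1), j ≠ i := by
    have : Nontrivial (Fin (n+1)) := Fin.nontrivial_iff_two_le.mpr (by omega)
    exact exists_ne i
  -- the matrix with column i replaced by column j
  set N := Λ.updateCol i (fun h => Λ h j) with hN
  have hminor : ∀ h : Fin (n+1),
      N.submatrix h.succAbove i.succAbove = delMinor Λ h i := by
    intro h
    ext a b
    simp [hN, delMinor, Matrix.updateCol_apply, (Fin.succAbove_ne i b)]
  have hNdet : N.det = 0 := by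
    apply Matrix.det_zero_of_column_eq hj.symm
    intro k
    simp [hN, Matrix.updateCol_apply, hj]
  rw [Matrix.det_succ_column N i] at hNdet
  have hsum : ∑ h : Fin (n+1), (-1 : ℝ) ^ (h + i : ℕ) * N h i *
      (N.submatrix h.succAbove i.succAbove).det
      = (-1 : ℝ) ^ ((Fin.last n : Fin (n+1)) + i : ℕ) *
        (delMinor Λ (Fin.last n) i).det := by
    rw [Finset.sum_eq_single (Fin.last n)]
    · rw [hminor]
      have : N (Fin.last n) i = 1 := by
        simp [hN, Matrix.updateCol_apply, hlast]
      rw [this, mul_one]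
    · intro h _ hne
      rw [hminor, hzero h hne, mul_zero]
    · intro habs
      exact absurd (Finset.mem_univ _) habs
  rw [hsum] at hNdet
  have hc : (delMinor Λ (Fin.last n) i).det = 0 := by
    have hpow : ((-1 : ℝ) ^ ((Fin.last n : Fin (n+1)) + i : ℕ)) ≠ 0 := by
      simp
    exact (mul_eq_zero.mp hNdet).resolve_left hpow
  apply hdet
  rw [Matrix.det_succ_column Λ i]
  apply Finset.sum_eq_zero
  intro h _
  by_cases hh : h = Fin.last n
  · subst hh
    rw [show Λ.submatrix (Fin.last n).succAbove i.succAbove = delMinor Λ (Fin.last n) i from rfl,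
      hc, mul_zero]
  · rw [show Λ.submatrix h.succAbove i.succAbove = delMinor Λ h i from rfl, hzero h hh, mul_zero]
end

section
/- Let S be an invertible n×n real matrix with all entries of the last row of S⁻¹ nonzero, and let Λ(a,i) = (S⁻¹)(a,i)/(S⁻¹)(n,i). Then for any indices i, j, h with det Λ_h^i ≠ 0, the ratio det(Λ_j^i)/det(Λ_h^i) equals (-1)^{h+j} · S(i,j)/S(i,h); in particular S(i,h) ≠ 0. -/
open Matrix BigOperators

/-!
`Λ` is `S⁻¹` with each column `b` divided by `g b = S⁻¹ (Fin.last n) b`, so every minor of `Λ`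
omitting column `i` is the corresponding minor of `S⁻¹` times the same factor
`∏_{l ≠ i} (g l)⁻¹`. By Jacobi's complementary minor identity the cofactors of `S⁻¹` are the
entries of `det S⁻¹ • S`, so the ratio of two such minors is a signed ratio of entries of `S`.
-/

theorem Matrix.adjugate_nonsing_inv {m R : Type*} [Fintype m] [DecidableEq m] [CommRing R]
    (A : Matrix m m R) (hA : IsUnit A.det) : A⁻¹.adjugate = A⁻¹.det • A :=
  calc A⁻¹.adjugate = A * A⁻¹ * A⁻¹.adjugate := by rw [mul_nonsing_inv A hA, one_mul]
    _ = A⁻¹.det • A := by rw [Matrix.mul_assoc, mul_adjugate, Matrix.mul_smul, Matrix.mul_one]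

theorem det_delMinor_nonsing_inv {n : ℕ} (A : Matrix (Fin (n+1)) (Fin (n+1)) ℝ)
    (hA : IsUnit A.det) (i j : Fin (n+1)) :
    (delMinor A⁻¹ j i).det = (-1) ^ ((j : ℕ) + i) * A⁻¹.det * A i j := by
  have hcofactor := congrFun₂ (A.adjugate_nonsing_inv hA) i j
  rw [adjugate_fin_succ_eq_det_submatrix, Matrix.smul_apply, smul_eq_mul] at hcofactor
  rw [mul_assoc, ← hcofactor, ← mul_assoc, ← pow_add, Even.neg_one_pow ⟨_, rfl⟩, one_mul,
    delMinor]

theorem delMinor_mul_diagonal {n : ℕ} (M : Matrix (Fin (n+1)) (Fin (n+1)) ℝ)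
    (d : Fin (n+1) → ℝ) (h i : Fin (n+1)) :
    delMinor (M * diagonal d) h i = delMinor M h i * diagonal (d ∘ i.succAbove) := by
  ext k l
  simp only [delMinor, submatrix_apply, mul_diagonal, Function.comp_apply]

theorem det_delMinor_mul_diagonal {n : ℕ} (M : Matrix (Fin (n+1)) (Fin (n+1)) ℝ)
    (d : Fin (n+1) → ℝ) (h i : Fin (n+1)) :
    (delMinor (M * diagonal d) h i).det = (delMinor M h i).det * ∏ l, d (i.succAbove l) := by
  rw [delMinor_mul_diagonal, det_mul, det_diagonal, Function.comp_def]

theorem neg_one_pow_add_eq_mul {R : Type*} [Monoid R] [HasDistribNeg R] (h i j : ℕ) :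
    (-1 : R) ^ (j + i) = (-1) ^ (h + j) * (-1) ^ (h + i) := by
  rw [← pow_add, show h + j + (h + i) = j + i + 2 * h by ring, pow_add _ (j + i), pow_mul,
    neg_one_sq, one_pow, mul_one]

theorem stmt6_general {n : ℕ} (S : Matrix (Fin (n+1)) (Fin (n+1)) ℝ) (hS : IsUnit S.det)
    (Λ : Matrix (Fin (n+1)) (Fin (n+1)) ℝ)
    (hΛ : ∀ a i, Λ a i = S⁻¹ a i / S⁻¹ (Fin.last n) i) :
    ∀ i j h : Fin (n+1), (delMinor Λ h i).det ≠ 0 →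
      (delMinor Λ j i).det / (delMinor Λ h i).det
          = (-1 : ℝ) ^ ((h : ℕ) + (j : ℕ)) * (S i j / S i h)
        ∧ S i h ≠ 0 := by
  intro i j h hne
  have hΛS : Λ = S⁻¹ * diagonal fun b => (S⁻¹ (Fin.last n) b)⁻¹ := by
    ext a b
    rw [hΛ, mul_diagonal, div_eq_mul_inv]
  set K := S⁻¹.det * ∏ l, (S⁻¹ (Fin.last n) (i.succAbove l))⁻¹
  have hminor : ∀ a, (delMinor Λ a i).det = (-1) ^ ((a : ℕ) + i) * K * S i a := by
    intro a
    rw [hΛS, det_delMinor_mul_diagonal, det_delMinor_nonsing_inv S hS]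
    ring
  rw [hminor h] at hne
  have hK : K ≠ 0 := right_ne_zero_of_mul (left_ne_zero_of_mul hne)
  have hSh : S i h ≠ 0 := right_ne_zero_of_mul hne
  refine ⟨?_, hSh⟩
  rw [hminor j, hminor h, neg_one_pow_add_eq_mul h]
  field_simp

/-- the fundamental functions, i.e. ratios of complementary minors of the
eigenvalue matrix Λ, equal signed ratios of entries of the Stäckel matrix S. -/
theorem stmt6 {n : ℕ} (S : Matrix (Fin (n+1)) (Fin (n+1)) ℝ) (hS : IsUnit S.det)
    (hg : ∀ i, S⁻¹ (Fin.last n) i ≠ 0)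
    (Λ : Matrix (Fin (n+1)) (Fin (n+1)) ℝ)
    (hΛ : ∀ a i, Λ a i = S⁻¹ a i / S⁻¹ (Fin.last n) i) :
    ∀ i j h : Fin (n+1), (delMinor Λ h i).det ≠ 0 →
      (delMinor Λ j i).det / (delMinor Λ h i).det
          = (-1 : ℝ) ^ ((h : ℕ) + (j : ℕ)) * (S i j / S i h)
        ∧ S i h ≠ 0 :=
  stmt6_general S hS Λ hΛ
end

section
/- Let Λ(q) be a smooth family of invertible n×n real matrices (n > 2) whose last row is identically 1, depending on a parameter t, and suppose there is a smooth function F(t) such that ∂_t Λ(a,c) = (Λ(1,c) − Λ(a,c))·F for all a, c (columns indexed by c, rows by a). Then for every row index k, ∂_t det(Λ_k^1) = −F·((n−2)·det(Λ_k^1) − ∑_{p=1}^n (−1)^p det(Λ_k^p)), where Λ_k^p is Λ with row k and column p removed. -/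
open Matrix BigOperators

/-- Derivative of a determinant of a one-parameter family of matrices, expressed
columnwise: replace each column in turn by the column of entrywise derivatives. -/
lemma hasDerivAt_det_aux {N : ℕ} (A : ℝ → Matrix (Fin N) (Fin N) ℝ)
    (A' : Matrix (Fin N) (Fin N) ℝ) (t : ℝ)
    (h : ∀ i j, HasDerivAt (fun s => A s i j) (A' i j) t) :
    HasDerivAt (fun s => (A s).det)
      (∑ j : Fin N, ((A t).updateCol j fun i => A' i j).det) t := by
  have key : HasDerivAt (fun s => ∑ σ : Equiv.Perm (Fin N),
      ((Equiv.Perm.sign σ : ℤ) : ℝ) * ∏ i, A s (σ i) i)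
      (∑ σ : Equiv.Perm (Fin N), ((Equiv.Perm.sign σ : ℤ) : ℝ) *
        ∑ i, (∏ j ∈ Finset.univ.erase i, A t (σ j) j) * A' (σ i) i) t := by
    refine HasDerivAt.fun_sum fun σ _ => ?_
    have := (HasDerivAt.finset_prod (u := Finset.univ)
      (f := fun i s => A s (σ i) i) (f' := fun i => A' (σ i) i)
      (fun i _ => h (σ i) i)).const_mul (((Equiv.Perm.sign σ : ℤ) : ℝ))
    simpa [smul_eq_mul] using this
  have e2 : ∀ jc : Fin N, ((A t).updateCol jc fun i => A' i jc).det
      = ∑ σ : Equiv.Perm (Fin N), ((Equiv.Perm.sign σ : ℤ) : ℝ) *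
          ((∏ j ∈ Finset.univ.erase jc, A t (σ j) j) * A' (σ jc) jc) := by
    intro jc
    rw [Matrix.det_apply']
    refine Finset.sum_congr rfl fun σ _ => ?_
    congr 1
    rw [← Finset.mul_prod_erase _ _ (Finset.mem_univ jc), Matrix.updateCol_self, mul_comm]
    congr 1
    refine Finset.prod_congr rfl fun j hj => ?_
    rw [Matrix.updateCol_ne (Finset.ne_of_mem_erase hj)]
  have e3 : (∑ σ : Equiv.Perm (Fin N), ((Equiv.Perm.sign σ : ℤ) : ℝ) *
        ∑ i, (∏ j ∈ Finset.univ.erase i, A t (σ j) j) * A' (σ i) i)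
      = ∑ j : Fin N, ((A t).updateCol j fun i => A' i j).det := by
    simp_rw [Finset.mul_sum]
    rw [Finset.sum_comm]
    exact Finset.sum_congr rfl fun jc _ => (e2 jc).symm
  rw [e3] at key
  have feq : (fun s => ∑ σ : Equiv.Perm (Fin N),
      ((Equiv.Perm.sign σ : ℤ) : ℝ) * ∏ i, A s (σ i) i) = fun s => (A s).det :=
    funext fun s => (Matrix.det_apply' (A s)).symm
  rwa [feq] at key

/-- determinant differentiation identity (3.9).  Λ(t) is a smooth family
of invertible matrices of size n+1 > 2 with last row ≡ 1; the eigenvalues evolve as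
∂_t λ^c_a = (λ^0_a − λ^c_a)·F (the eigenvector of the first column is a conformal
Killing vector).  Then the minors deleting the first column satisfy the stated ODE.
(0-indexed: the paper's ∑_{p=1}^{N}(-1)^p det Λ_k^p equals −∑_{p} (-1)^p det Λ_k^p here.) -/
theorem stmt8 {n : ℕ} (hn : 2 ≤ n)
    (Λ : ℝ → Matrix (Fin (n+1)) (Fin (n+1)) ℝ) (F : ℝ → ℝ)
    (hΛsm : ∀ a c, ContDiff ℝ (⊤ : ℕ∞) (fun t => Λ t a c)) (hFsm : ContDiff ℝ (⊤ : ℕ∞) F)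
    (hinv : ∀ t, (Λ t).det ≠ 0)
    (hlast : ∀ t c, Λ t (Fin.last n) c = 1)
    (hder : ∀ (a c : Fin (n+1)) (t : ℝ),
      HasDerivAt (fun s => Λ s a c) ((Λ t a 0 - Λ t a c) * F t) t)
    (k : Fin (n+1)) (t : ℝ) :
    HasDerivAt (fun s => (delMinor (Λ s) k 0).det)
      (-(F t) * (((n : ℝ) - 1) * (delMinor (Λ t) k 0).det
        + ∑ p : Fin (n+1), (-1 : ℝ) ^ (p : ℕ) * (delMinor (Λ t) k p).det)) t := by
  obtain ⟨m, rfl⟩ : ∃ m, n = m + 1 := ⟨n - 1, by omega⟩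
  set M : Matrix (Fin (m+1)) (Fin (m+1)) ℝ := delMinor (Λ t) k 0 with hM
  set v : Fin (m+1) → ℝ := fun i => Λ t (k.succAbove i) 0 with hv
  -- Step A: the raw derivative
  have stepA : HasDerivAt (fun s => (delMinor (Λ s) k 0).det)
      (∑ j : Fin (m+1), (M.updateCol j fun i => (v i - M i j) * F t).det) t := by
    refine hasDerivAt_det_aux (fun s => delMinor (Λ s) k 0)
      (Matrix.of fun i j => (v i - M i j) * F t) t ?_
    intro i j
    exact hder (k.succAbove i) ((0 : Fin (m+2)).succAbove j) t
  -- Step B: multilinearity in each column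
  have stepB : ∀ j : Fin (m+1),
      (M.updateCol j fun i => (v i - M i j) * F t).det
        = F t * ((M.updateCol j v).det - M.det) := by
    intro j
    have hc : (fun i => (v i - M i j) * F t)
        = F t • (v - fun i => M i j) := by
      funext i; simp [mul_comm, smul_eq_mul]
    rw [hc, Matrix.det_updateCol_smul, sub_eq_add_neg, Matrix.det_updateCol_add]
    have hthis : (M.updateCol j (-fun i => M i j)).det = -(M.det) := by
      calc (M.updateCol j (-fun i => M i j)).det
          = (M.updateCol j ((-1 : ℝ) • fun i => M i j)).det := by
            congr 1; ext i; simp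
        _ = -(M.det) := by rw [Matrix.det_updateCol_smul, Matrix.updateCol_eq_self]; ring
    rw [hthis]
    ring
  -- Cofactor expansion of the updated matrix along its updated column
  have expandT : ∀ j : Fin (m+1), (M.updateCol j v).det
      = ∑ i : Fin (m+1), (-1 : ℝ) ^ ((i : ℕ) + (j : ℕ)) * v i
          * (M.submatrix i.succAbove j.succAbove).det := by
    intro j
    rw [Matrix.det_succ_column (M.updateCol j v) j]
    refine Finset.sum_congr rfl fun i _ => ?_
    have hsub : (M.updateCol j v).submatrix i.succAbove j.succAbove
        = M.submatrix i.succAbove j.succAbove := by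
      ext x y
      simp only [Matrix.submatrix_apply]
      rw [Matrix.updateCol_ne (Fin.succAbove_ne j y)]
    rw [Matrix.updateCol_self, hsub]
  -- Cofactor expansion of the minors delMinor Λ k (q.succ) along their column 0
  have expandS : ∀ q : Fin (m+1), (delMinor (Λ t) k q.succ).det
      = ∑ i : Fin (m+1), (-1 : ℝ) ^ (i : ℕ) * v i
          * (M.submatrix i.succAbove q.succAbove).det := by
    intro q
    rw [Matrix.det_succ_column_zero]
    refine Finset.sum_congr rfl fun i _ => ?_
    have h0 : (delMinor (Λ t) k q.succ) i 0 = v i := by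
      show Λ t (k.succAbove i) (q.succ.succAbove 0) = v i
      rw [Fin.succ_succAbove_zero]
    have hsub : (delMinor (Λ t) k q.succ).submatrix i.succAbove Fin.succ
        = M.submatrix i.succAbove q.succAbove := by
      ext x y
      show Λ t (k.succAbove (i.succAbove x)) (q.succ.succAbove y.succ)
          = Λ t (k.succAbove (i.succAbove x)) ((0 : Fin (m+2)).succAbove (q.succAbove y))
      rw [Fin.succ_succAbove_succ, Fin.zero_succAbove]
    rw [h0, hsub]
  -- Step C: the key combinatorial identity  T = D - S
  have stepC : ∑ j : Fin (m+1), (M.updateCol j v).det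
      = M.det - ∑ p : Fin (m+2), (-1 : ℝ) ^ (p : ℕ) * (delMinor (Λ t) k p).det := by
    have hS : ∑ p : Fin (m+2), (-1 : ℝ) ^ (p : ℕ) * (delMinor (Λ t) k p).det
        = M.det + ∑ q : Fin (m+1), (-1 : ℝ) ^ ((q : ℕ) + 1) * (delMinor (Λ t) k q.succ).det := by
      rw [Fin.sum_univ_succ]
      simp [hM]
    have hneg : ∑ q : Fin (m+1), (-1 : ℝ) ^ ((q : ℕ) + 1) * (delMinor (Λ t) k q.succ).det
        = ∑ q : Fin (m+1), ∑ i : Fin (m+1),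
            -((-1 : ℝ) ^ ((i : ℕ) + (q : ℕ)) * v i
              * (M.submatrix i.succAbove q.succAbove).det) := by
      refine Finset.sum_congr rfl fun q _ => ?_
      rw [expandS q, Finset.mul_sum]
      refine Finset.sum_congr rfl fun i _ => ?_
      rw [pow_add, pow_add]
      ring
    have hT : ∑ j : Fin (m+1), (M.updateCol j v).det
        = ∑ j : Fin (m+1), ∑ i : Fin (m+1),
            (-1 : ℝ) ^ ((i : ℕ) + (j : ℕ)) * v i
              * (M.submatrix i.succAbove j.succAbove).det :=
      Finset.sum_congr rfl fun j _ => expandT j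
    rw [hS, hneg, hT]
    simp only [Finset.sum_neg_distrib]
    ring
  -- Assemble
  have h1 : (∑ j : Fin (m+1), (M.updateCol j fun i => (v i - M i j) * F t).det)
      = ∑ j : Fin (m+1), F t * ((M.updateCol j v).det - M.det) :=
    Finset.sum_congr rfl fun j _ => stepB j
  rw [h1, ← Finset.mul_sum, Finset.sum_sub_distrib, Finset.sum_const, Finset.card_univ,
    Fintype.card_fin, stepC, nsmul_eq_mul] at stepA
  convert stepA using 1
  push_cast
  ring
end

section
/- Let Λ(t) be a smooth family of invertible n×n real matrices (n > 2) whose last row is identically 1, and suppose ∂_t Λ(a,c) = (Λ(1,c) − Λ(a,c))·F(t) for a smooth function F. Then for all k < n and all b with k ≤ b < n for which det Λ_b^1 ≠ 0, the ratio f(t) = det(Λ_k^1(t))/det(Λ_b^1(t)) satisfies ∂_t f = 0; and ∂_t (det Λ_n^1 / det Λ_k^1) = (−1)^{n+1} F · det Λ / det Λ_k^1. -/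
open Matrix BigOperators

theorem hasDerivAt_det {m : ℕ} {M : ℝ → Matrix (Fin m) (Fin m) ℝ}
    {N : Matrix (Fin m) (Fin m) ℝ} {t : ℝ}
    (h : ∀ i j, HasDerivAt (fun s => M s i j) (N i j) t) :
    HasDerivAt (fun s => (M s).det)
      (∑ i, (Matrix.updateRow (M t) i (N i)).det) t := by
  have key : ∀ σ : Equiv.Perm (Fin m),
      HasDerivAt (fun s => (((Equiv.Perm.sign σ : ℤ)) : ℝ) * ∏ i, M s (σ i) i)
        ((((Equiv.Perm.sign σ : ℤ)) : ℝ) *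
          ∑ j, (∏ l ∈ Finset.univ.erase j, M t (σ l) l) * N (σ j) j) t := by
    intro σ
    have := (HasDerivAt.finset_prod (u := (Finset.univ : Finset (Fin m)))
      (f := fun i s => M s (σ i) i) (f' := fun i => N (σ i) i) (x := t)
      (fun i _ => h (σ i) i)).const_mul ((((Equiv.Perm.sign σ : ℤ)) : ℝ))
    simpa [smul_eq_mul, Finset.mul_sum] using this
  have main := HasDerivAt.fun_sum (u := (Finset.univ : Finset (Equiv.Perm (Fin m))))
    (fun σ _ => key σ)
  have e1 : (fun s => (M s).det) = fun s => ∑ σ : Equiv.Perm (Fin m),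
      (((Equiv.Perm.sign σ : ℤ)) : ℝ) * ∏ i, M s (σ i) i := by
    funext s; rw [Matrix.det_apply']
  rw [e1]
  refine main.congr_deriv (Eq.symm ?_)
  have e2 : ∀ i : Fin m, (Matrix.updateRow (M t) i (N i)).det
      = ∑ σ : Equiv.Perm (Fin m), (((Equiv.Perm.sign σ : ℤ)) : ℝ) *
          ∏ j, Matrix.updateRow (M t) i (N i) (σ j) j := by
    intro i; rw [Matrix.det_apply']
  simp only [e2]
  rw [Finset.sum_comm]
  refine Finset.sum_congr rfl (fun σ _ => ?_)
  rw [← Finset.mul_sum]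
  congr 1
  rw [← Equiv.sum_comp σ
    (fun x => ∏ j, Matrix.updateRow (M t) x (N x) (σ j) j)]
  refine Finset.sum_congr rfl (fun i _ => ?_)
  have e3 : ∀ j : Fin m, Matrix.updateRow (M t) (σ i) (N (σ i)) (σ j) j
      = Function.update (fun j => M t (σ j) j) i (N (σ i) i) j := by
    intro j
    rw [Matrix.updateRow_apply, Function.update]
    simp only [EmbeddingLike.apply_eq_iff_eq]
    by_cases hji : j = i
    · subst hji; simp
    · simp [hji]
  rw [Finset.prod_congr rfl (fun j _ => e3 j),
    Finset.prod_update_of_mem (Finset.mem_univ i), Finset.sdiff_singleton_eq_erase, mul_comm]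

/-- Derivative of the determinant of the minor along the flow. -/
theorem minor_deriv {n : ℕ}
    (Λ : ℝ → Matrix (Fin (n+1)) (Fin (n+1)) ℝ) (F : ℝ → ℝ)
    (hder : ∀ (a c : Fin (n+1)) (t : ℝ),
      HasDerivAt (fun s => Λ s a c) ((Λ t a 0 - Λ t a c) * F t) t)
    (k : Fin (n+1)) (t : ℝ) :
    HasDerivAt (fun s => (delMinor (Λ s) k 0).det)
      (F t * ((∑ i, Λ t (k.succAbove i) 0 *
          (Matrix.updateRow (delMinor (Λ t) k 0) i (fun _ => (1:ℝ))).det)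
        - n * (delMinor (Λ t) k 0).det)) t := by
  have h := hasDerivAt_det (M := fun s => delMinor (Λ s) k 0)
    (N := fun i j => (Λ t (k.succAbove i) 0 - delMinor (Λ t) k 0 i j) * F t) (t := t)
    (fun i j => hder (k.succAbove i) ((0 : Fin (n+1)).succAbove j) t)
  convert h using 1
  have per : ∀ i : Fin n,
      (Matrix.updateRow (delMinor (Λ t) k 0) i
        (fun j => (Λ t (k.succAbove i) 0 - delMinor (Λ t) k 0 i j) * F t)).det
      = F t * (Λ t (k.succAbove i) 0 *
          (Matrix.updateRow (delMinor (Λ t) k 0) i (fun _ => (1:ℝ))).det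
        - (delMinor (Λ t) k 0).det) := by
    intro i
    set M := delMinor (Λ t) k 0 with hM
    have e : (fun j => (Λ t (k.succAbove i) 0 - M i j) * F t)
        = F t • ((Λ t (k.succAbove i) 0 • (fun _ => (1:ℝ)))
            + (-1 : ℝ) • M i) := by
      funext j; simp [smul_eq_mul]; ring
    rw [e, Matrix.det_updateRow_smul, Matrix.det_updateRow_add,
      Matrix.det_updateRow_smul, Matrix.det_updateRow_smul,
      Matrix.updateRow_eq_self]
    ring
  rw [Finset.sum_congr rfl (fun i _ => per i), ← Finset.mul_sum]
  congr 1
  rw [Finset.sum_sub_distrib, Finset.sum_const, Finset.card_univ, Fintype.card_fin,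
    nsmul_eq_mul]

theorem sumA {n : ℕ} (Λ : Matrix (Fin (n+1)) (Fin (n+1)) ℝ)
    (hlast : ∀ c, Λ (Fin.last n) c = 1)
    (k : Fin (n+1)) (hk : k < Fin.last n) :
    ∑ i, Λ (k.succAbove i) 0 *
        (Matrix.updateRow (delMinor Λ k 0) i (fun _ => (1:ℝ))).det
      = (delMinor Λ k 0).det := by
  obtain ⟨i₀, hi₀⟩ := Fin.exists_succAbove_eq (x := Fin.last n) (y := k) hk.ne'
  have hrow : delMinor Λ k 0 i₀ = fun _ => (1:ℝ) := by
    funext j; simp [delMinor, hi₀, hlast]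
  rw [Finset.sum_eq_single_of_mem i₀ (Finset.mem_univ _) ?_]
  · rw [hi₀, hlast 0, one_mul, ← hrow, Matrix.updateRow_eq_self]
  · intro i _ hne
    have : (Matrix.updateRow (delMinor Λ k 0) i (fun _ => (1:ℝ))).det = 0 := by
      apply Matrix.det_zero_of_row_eq hne
      rw [Matrix.updateRow_self, Matrix.updateRow_ne (Ne.symm hne), hrow]
    rw [this, mul_zero]

theorem sumB {n : ℕ} (Λ : Matrix (Fin (n+1)) (Fin (n+1)) ℝ)
    (hlast : ∀ c, Λ (Fin.last n) c = 1) :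
    ∑ i, Λ ((Fin.last n).succAbove i) 0 *
        (Matrix.updateRow (delMinor Λ (Fin.last n) 0) i (fun _ => (1:ℝ))).det
      = (-1 : ℝ)^(n+1) * Λ.det + (delMinor Λ (Fin.last n) 0).det := by
  have hsq : ((-1 : ℝ))^n * ((-1 : ℝ))^n = 1 := by
    rw [← pow_add]; exact Even.neg_one_pow ⟨n, rfl⟩
  set M := delMinor Λ (Fin.last n) 0 with hMdef
  -- per-index identity
  have per : ∀ i : Fin n,
      Λ (Fin.castSucc i) 0 * (Matrix.updateRow M i (fun _ => (1:ℝ))).det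
        = (-1 : ℝ)^(n+1) * ((-1 : ℝ)^(i : ℕ) * Λ (Fin.castSucc i) 0 *
            (delMinor Λ (Fin.castSucc i) 0).det) := by
    intro i
    set c := Λ (Fin.castSucc i) 0 with hc
    set Λ' := Matrix.updateRow Λ (Fin.castSucc i) (fun _ => c) with hΛ'
    have hne_last : Fin.castSucc i ≠ Fin.last n := (Fin.castSucc_lt_last i).ne
    -- det Λ' = 0
    have hdet0 : Λ'.det = 0 := by
      have e : (fun _ : Fin (n+1) => c) = c • (fun _ => (1:ℝ)) := by
        funext j; simp
      rw [hΛ', e, Matrix.det_updateRow_smul]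
      have : (Matrix.updateRow Λ (Fin.castSucc i) (fun _ => (1:ℝ))).det = 0 := by
        apply Matrix.det_zero_of_row_eq hne_last
        rw [Matrix.updateRow_self, Matrix.updateRow_ne (Ne.symm hne_last)]
        funext j; simp [hlast]
      rw [this, mul_zero]
    -- column expansion of Λ'
    have hexp := Matrix.det_succ_column_zero Λ'
    rw [Fin.sum_univ_castSucc] at hexp
    -- middle terms vanish
    have hmid : ∀ i' : Fin n, i' ≠ i →
        (-1 : ℝ)^(i' : ℕ) * Λ' (Fin.castSucc i') 0 *
          (Λ'.submatrix (Fin.castSucc i').succAbove Fin.succ).det = 0 := by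
      intro i' hne
      set S := Λ'.submatrix (Fin.castSucc i').succAbove Fin.succ with hS
      obtain ⟨a, ha⟩ := Fin.exists_succAbove_eq (x := Fin.castSucc i)
        (y := Fin.castSucc i') (by simpa using hne.symm)
      obtain ⟨b, hb⟩ := Fin.exists_succAbove_eq (x := Fin.last n)
        (y := Fin.castSucc i') (Fin.castSucc_lt_last i').ne'
      have hab : a ≠ b := by
        intro h; rw [h, hb] at ha; exact hne_last ha.symm
      have hSa : S a = fun _ => c := by
        funext j; simp [hS, ha, hΛ']
      have hSb : S b = fun _ => (1:ℝ) := by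
        funext j
        simp only [hS, Matrix.submatrix_apply, hb, hΛ',
          Matrix.updateRow_ne (Ne.symm hne_last)]
        exact hlast _
      have : S.det = 0 := by
        conv_lhs => rw [← Matrix.updateRow_eq_self S a, hSa,
          show (fun _ : Fin n => c) = c • (fun _ => (1:ℝ)) from funext fun _ => by simp]
        rw [Matrix.det_updateRow_smul]
        have h0 : (Matrix.updateRow S a (fun _ => (1:ℝ))).det = 0 := by
          apply Matrix.det_zero_of_row_eq hab
          rw [Matrix.updateRow_self, Matrix.updateRow_ne (Ne.symm hab), hSb]
        rw [h0, mul_zero]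
      rw [this, mul_zero]
    -- term at i
    have hterm_i : (-1 : ℝ)^(i : ℕ) * Λ' (Fin.castSucc i) 0 *
        (Λ'.submatrix (Fin.castSucc i).succAbove Fin.succ).det
      = (-1 : ℝ)^(i : ℕ) * c * (delMinor Λ (Fin.castSucc i) 0).det := by
      have h1 : Λ' (Fin.castSucc i) 0 = c := by rw [hΛ', Matrix.updateRow_self]
      have h2 : Λ'.submatrix (Fin.castSucc i).succAbove Fin.succ
          = delMinor Λ (Fin.castSucc i) 0 := by
        ext a b
        simp only [Matrix.submatrix_apply, hΛ',
          Matrix.updateRow_ne (Fin.succAbove_ne (Fin.castSucc i) a), delMinor]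
        rw [Fin.zero_succAbove]
      rw [h1, h2]
    -- term at last
    have hterm_last : Λ' (Fin.last n) 0 = 1 := by
      rw [hΛ', Matrix.updateRow_ne (Ne.symm hne_last)]; exact hlast 0
    have hsub_last : Λ'.submatrix (Fin.last n).succAbove Fin.succ
        = Matrix.updateRow M i (fun _ => c) := by
      ext a b
      simp only [Matrix.submatrix_apply, Fin.succAbove_last]
      by_cases hai : a = i
      · subst hai
        rw [hΛ', Matrix.updateRow_self, Matrix.updateRow_self]
      · rw [hΛ', Matrix.updateRow_ne (fun h => hai (Fin.castSucc_injective n h)),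
          Matrix.updateRow_ne hai]
        simp [hMdef, delMinor, Fin.succAbove_last, Fin.zero_succAbove]
    have hMc : (Matrix.updateRow M i (fun _ => c)).det
        = c * (Matrix.updateRow M i (fun _ => (1:ℝ))).det := by
      rw [show (fun _ : Fin n => c) = c • (fun _ => (1:ℝ)) from funext fun _ => by simp,
        Matrix.det_updateRow_smul]
    -- assemble
    simp only [Fin.coe_castSucc, Fin.val_last] at hexp
    rw [hdet0, Finset.sum_eq_single_of_mem i (Finset.mem_univ _)
      (fun i' _ h => hmid i' h), hterm_i, hterm_last, hsub_last, hMc, mul_one] at hexp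
    linear_combination (-(-1:ℝ)^n) * hexp
      - ((Matrix.updateRow M i (fun _ => (1:ℝ))).det * c) * hsq
  -- sum it up
  have hsucc : ∀ i : Fin n, (Fin.last n).succAbove i = Fin.castSucc i := by
    intro i; rw [Fin.succAbove_last]
  calc ∑ i, Λ ((Fin.last n).succAbove i) 0 *
        (Matrix.updateRow M i (fun _ => (1:ℝ))).det
      = ∑ i : Fin n, (-1 : ℝ)^(n+1) * ((-1 : ℝ)^(i : ℕ) * Λ (Fin.castSucc i) 0 *
            (delMinor Λ (Fin.castSucc i) 0).det) := by
        refine Finset.sum_congr rfl (fun i _ => ?_)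
        rw [hsucc i, per i]
    _ = (-1 : ℝ)^(n+1) * (∑ i : Fin n, (-1 : ℝ)^(i : ℕ) * Λ (Fin.castSucc i) 0 *
            (delMinor Λ (Fin.castSucc i) 0).det) := by rw [Finset.mul_sum]
    _ = (-1 : ℝ)^(n+1) * Λ.det + M.det := by
        have hexp := Matrix.det_succ_column_zero Λ
        rw [Fin.sum_univ_castSucc] at hexp
        have hmin : ∀ j : Fin (n+1), Λ.submatrix j.succAbove Fin.succ = delMinor Λ j 0 := by
          intro j; ext a b; simp [delMinor, Fin.zero_succAbove]
        simp only [hmin, Fin.coe_castSucc, Fin.val_last] at hexp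
        rw [hlast 0, mul_one] at hexp
        linear_combination (-(-1:ℝ)^(n+1)) * hexp + M.det * hsq

/-- computation (3.11).  Under the same evolution as in the determinant
differentiation identity, all fundamental functions f_1^{bk} with rows k ≤ b before
the last row are constant in t, while f_1^{nk} evolves proportionally to F. -/
theorem stmt9 {n : ℕ} (hn : 2 ≤ n)
    (Λ : ℝ → Matrix (Fin (n+1)) (Fin (n+1)) ℝ) (F : ℝ → ℝ)
    (hΛsm : ∀ a c, ContDiff ℝ (⊤ : ℕ∞) (fun t => Λ t a c)) (hFsm : ContDiff ℝ (⊤ : ℕ∞) F)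
    (hinv : ∀ t, (Λ t).det ≠ 0)
    (hlast : ∀ t c, Λ t (Fin.last n) c = 1)
    (hder : ∀ (a c : Fin (n+1)) (t : ℝ),
      HasDerivAt (fun s => Λ s a c) ((Λ t a 0 - Λ t a c) * F t) t)
    (k : Fin (n+1)) (hk : k < Fin.last n) (t : ℝ) :
    (∀ b : Fin (n+1), k ≤ b → b < Fin.last n → (delMinor (Λ t) b 0).det ≠ 0 →
      HasDerivAt
        (fun s => (delMinor (Λ s) k 0).det / (delMinor (Λ s) b 0).det) 0 t) ∧
    ((delMinor (Λ t) k 0).det ≠ 0 →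
      HasDerivAt
        (fun s => (delMinor (Λ s) (Fin.last n) 0).det / (delMinor (Λ s) k 0).det)
        ((-1 : ℝ) ^ (n + 1) * F t * (Λ t).det / (delMinor (Λ t) k 0).det) t) := by
  have derivA : ∀ (p : Fin (n+1)), p < Fin.last n →
      HasDerivAt (fun s => (delMinor (Λ s) p 0).det)
        ((1 - (n:ℝ)) * F t * (delMinor (Λ t) p 0).det) t := by
    intro p hp
    have h := minor_deriv Λ F hder p t
    rw [sumA (Λ t) (hlast t) p hp] at h
    convert h using 1; ring
  have derivB : HasDerivAt (fun s => (delMinor (Λ s) (Fin.last n) 0).det)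
      (F t * (((-1:ℝ)^(n+1) * (Λ t).det + (delMinor (Λ t) (Fin.last n) 0).det)
        - n * (delMinor (Λ t) (Fin.last n) 0).det)) t := by
    have h := minor_deriv Λ F hder (Fin.last n) t
    rw [sumB (Λ t) (hlast t)] at h
    exact h
  constructor
  · intro b _ hb hbdet
    have := (derivA k hk).fun_div (derivA b hb) hbdet
    refine this.congr_deriv (Eq.symm ?_)
    rw [eq_comm, div_eq_zero_iff]; left; ring
  · intro hkdet
    have := derivB.fun_div (derivA k hk) hkdet
    refine this.congr_deriv (Eq.symm ?_)
    field_simp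
    ring
end

section
/- With Λ(a,i) = σ_{a-1}^i (elementary symmetric polynomials of degree a−1 in the variables u^j, j ≠ i) for pairwise distinct reals u^1,…,u^n, the fundamental functions satisfy f_i^{jh} := det(Λ_j^i)/det(Λ_h^i) = (u^i)^{h−j} for all i and all j, h for which det Λ_h^i ≠ 0. -/
/-!
The row vector `w = ((-1)^a x^(n-a))_a` satisfies `(w Λ)_k = ∏_{l ≠ k} (x - u l)` by Vieta's
formulas, so for `x = u i` it is `D e_i` with `D = ∏_{l ≠ i} (u i - u l) ≠ 0`. Multiplying on the
right by `adj Λ` gives `det Λ • w = D • (adj Λ)_i`, and the cofactor expansion of `(adj Λ)_i` turns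
this into `det Λ_p^i = c · (u i)^(n-p)` with `c` independent of `p`. The ratio of two such minors
is a power of `u i`.
-/

open Matrix BigOperators

/-- The elementary symmetric polynomial of degree `a` in the variables `u j`, `j ≠ i`. -/
noncomputable def esymmDel {n : ℕ} (u : Fin n → ℝ) (i : Fin n) (a : ℕ) : ℝ :=
  ∑ t ∈ Finset.powersetCard a (Finset.univ.erase i), ∏ j ∈ t, u j

theorem Finset.prod_sub_eq_sum_powersetCard {ι R : Type*} [CommRing R] (s : Finset ι) (f : ι → R)
    (x : R) :
    ∏ j ∈ s, (x - f j) = ∑ a ∈ Finset.range (s.card + 1),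
      (-1) ^ a * (∑ t ∈ s.powersetCard a, ∏ j ∈ t, f j) * x ^ (s.card - a) := by
  have := congrArg (Polynomial.eval x) (Multiset.prod_X_sub_X_eq_sum_esymm (s.val.map f))
  simpa [Polynomial.eval_prod, Polynomial.eval_finsetSum, Finset.esymm_map_val, mul_assoc]
    using this

theorem Matrix.det_smul_eq_smul_adjugate_row {ι R : Type*} [Fintype ι] [DecidableEq ι] [CommRing R]
    (A : Matrix ι ι R) {w : ι → R} {i : ι} {d : R} (h : w ᵥ* A = Pi.single i d) :
    A.det • w = d • adjugate A i :=
  calc A.det • w = w ᵥ* (A * adjugate A) := by rw [mul_adjugate, vecMul_smul, vecMul_one]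
    _ = d • adjugate A i := by rw [← vecMul_vecMul, h, single_vecMul]; rfl

theorem pow_div_pow_eq_zpow_sub {G₀ : Type*} [GroupWithZero G₀] (x : G₀) (a : ℕ) {b : ℕ}
    (hb : x ^ b ≠ 0) : x ^ a / x ^ b = x ^ ((a : ℤ) - b) := by
  by_cases hx : x = 0
  · obtain rfl : b = 0 := by by_contra hb0; exact hb (by simp [hx, hb0])
    simp
  · rw [← zpow_natCast, ← zpow_natCast, zpow_sub₀ hx]

noncomputable def esymmDelMatrix {n : ℕ} (u : Fin n → ℝ) : Matrix (Fin n) (Fin n) ℝ :=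
  Matrix.of fun a i => esymmDel u i a

theorem vecMul_esymmDelMatrix {n : ℕ} (u : Fin (n + 1) → ℝ) (x : ℝ) :
    (fun a : Fin (n + 1) => (-1) ^ (a : ℕ) * x ^ (n - a)) ᵥ* esymmDelMatrix u
      = fun k => ∏ l ∈ Finset.univ.erase k, (x - u l) := by
  funext k
  have hcard : (Finset.univ.erase k).card = n := by simp
  rw [Finset.prod_sub_eq_sum_powersetCard, hcard, ← Fin.sum_univ_eq_sum_range]
  simp only [vecMul, dotProduct, esymmDelMatrix, esymmDel, of_apply]
  exact Finset.sum_congr rfl fun a _ => by ring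

theorem det_mul_pow_eq_prod_mul_det_delMinor_esymmDelMatrix {n : ℕ} (u : Fin (n + 1) → ℝ)
    (i p : Fin (n + 1)) :
    (esymmDelMatrix u).det * u i ^ (n - p)
      = (-1) ^ (i : ℕ) * (∏ l ∈ Finset.univ.erase i, (u i - u l))
        * (delMinor (esymmDelMatrix u) p i).det := by
  have hsingle : (fun k => ∏ l ∈ Finset.univ.erase k, (u i - u l))
      = Pi.single i (∏ l ∈ Finset.univ.erase i, (u i - u l)) := by
    funext k
    rcases eq_or_ne k i with rfl | hk
    · simp
    · rw [Pi.single_eq_of_ne hk]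
      exact Finset.prod_eq_zero (Finset.mem_erase.mpr ⟨hk.symm, Finset.mem_univ i⟩) (sub_self _)
  have hrow := congrFun ((esymmDelMatrix u).det_smul_eq_smul_adjugate_row
    ((vecMul_esymmDelMatrix u (u i)).trans hsingle)) p
  simp only [Pi.smul_apply, smul_eq_mul, adjugate_fin_succ_eq_det_submatrix, pow_add] at hrow
  refine mul_left_cancel₀ (pow_ne_zero (p : ℕ) (neg_ne_zero.mpr one_ne_zero)) ?_
  unfold delMinor
  linear_combination hrow

theorem stmt12_general {n : ℕ} (u : Fin (n+1) → ℝ) (hu : Function.Injective u)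
    (Λ : Matrix (Fin (n+1)) (Fin (n+1)) ℝ)
    (hΛ : ∀ a i : Fin (n+1), Λ a i = esymmDel u i (a : ℕ)) :
    ∀ i j h : Fin (n+1), (delMinor Λ h i).det ≠ 0 →
      (delMinor Λ j i).det / (delMinor Λ h i).det
        = (u i) ^ ((h : ℤ) - (j : ℤ)) := by
  intro i j h hmh
  obtain rfl : Λ = esymmDelMatrix u := Matrix.ext hΛ
  set D := (-1) ^ (i : ℕ) * ∏ l ∈ Finset.univ.erase i, (u i - u l)
  have hD : D ≠ 0 := mul_ne_zero (pow_ne_zero _ (neg_ne_zero.mpr one_ne_zero)) <|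
    Finset.prod_ne_zero_iff.mpr fun l hl => sub_ne_zero.mpr (hu.ne (Finset.ne_of_mem_erase hl).symm)
  set c := (esymmDelMatrix u).det / D
  have hminor : ∀ p, (delMinor (esymmDelMatrix u) p i).det = c * u i ^ (n - p) := fun p => by
    rw [div_mul_eq_mul_div, eq_div_iff hD, det_mul_pow_eq_prod_mul_det_delMinor_esymmDelMatrix]
    ring
  rw [hminor h] at hmh
  rw [hminor j, hminor h, mul_div_mul_left _ _ (left_ne_zero_of_mul hmh),
    pow_div_pow_eq_zpow_sub _ _ (right_ne_zero_of_mul hmh)]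
  congr 1
  omega

/-- for the matrix of elementary symmetric polynomials, the fundamental
functions are f_i^{jh} = det(Λ_j^i)/det(Λ_h^i) = (u^i)^{h−j}. -/
theorem stmt12 {n : ℕ} (u : Fin (n+1) → ℝ) (hu : Function.Injective u)
    (hu0 : ∀ i, u i ≠ 0)
    (Λ : Matrix (Fin (n+1)) (Fin (n+1)) ℝ)
    (hΛ : ∀ a i : Fin (n+1), Λ a i = esymmDel u i (a : ℕ)) :
    ∀ i j h : Fin (n+1), (delMinor Λ h i).det ≠ 0 →
      (delMinor Λ j i).det / (delMinor Λ h i).det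
        = (u i) ^ ((h : ℤ) - (j : ℤ)) :=
  stmt12_general u hu Λ hΛ
end

section
/- In ℝ³ minus the z-axis, with E₁ = I₃ × R₃ where I₃ = (−2xz,−2yz,x²+y²−z²) and R₃ = (−y,x,0), the function f(x,y,z) = −(x²+y²+z²)²/(x²+y²) has gradient parallel to E₁ at every point; i.e., ∇f × E₁ = 0. Hence the level surfaces of f (toroids tangent to the z-axis at the origin) are orthogonal to E₁. -/
open Matrix BigOperators

/-- Partial derivative in the direction of the k-th coordinate. -/
noncomputable def pd3 (k : Fin 3) (φ : (Fin 3 → ℝ) → ℝ) (p : Fin 3 → ℝ) : ℝ :=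
  fderiv ℝ φ p (Pi.single k 1)

/-- The rotation field around the z-axis: R₃ = (−y, x, 0). -/
def R3 (p : Fin 3 → ℝ) : Fin 3 → ℝ := ![-(p 1), p 0, 0]

/-- The inversion field I₃ = (−2xz, −2yz, x²+y²−z²). -/
def I3 (p : Fin 3 → ℝ) : Fin 3 → ℝ :=
  ![-2 * p 0 * p 2, -2 * p 1 * p 2, p 0 ^ 2 + p 1 ^ 2 - p 2 ^ 2]

/-!
Write r² = x² + y² + z² and ρ = x² + y². Then
I₃ × R₃ = −(x (ρ − z²), y (ρ − z²), 2zρ), and differentiating f = −r⁴/ρ gives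
∇f = (2r²/ρ²) (I₃ × R₃).
-/

theorem HasFDerivAt.sq_div {E : Type*} [NormedAddCommGroup E] [NormedSpace ℝ E]
    {u v : E → ℝ} {u' v' : E →L[ℝ] ℝ} {p : E} (hu : HasFDerivAt u u' p)
    (hv : HasFDerivAt v v' p) (hv0 : v p ≠ 0) :
    HasFDerivAt (fun q => u q ^ 2 / v q) ((u p / v p ^ 2) • ((2 * v p) • u' - u p • v')) p := by
  simp_rw [div_eq_mul_inv]
  refine ((hu.pow 2).mul ((hasDerivAt_inv hv0).comp_hasFDerivAt p hv)).congr_fderiv ?_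
  ext w
  simp only [Function.comp_apply, nsmul_eq_mul, Nat.cast_ofNat, Nat.add_one_sub_one, pow_one,
    _root_.add_apply, _root_.sub_apply, _root_.neg_apply,
    _root_.smul_apply, smul_eq_mul, neg_smul, smul_neg]
  field_simp
  ring

theorem hasFDerivAt_sum_sq {ι : Type*} [Fintype ι] (s : Finset ι) (p : ι → ℝ) :
    HasFDerivAt (fun q : ι → ℝ => ∑ i ∈ s, q i ^ 2)
      (∑ i ∈ s, (2 * p i) • ContinuousLinearMap.proj (R := ℝ) (φ := fun _ : ι => ℝ) i) p := by
  refine (HasFDerivAt.fun_sum fun i _ => (hasFDerivAt_apply i p).pow 2).congr_fderiv ?_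
  ext w
  simp

theorem gradient_eq_smul_I3_cross_R3 (p : Fin 3 → ℝ) (hp : p 0 ^ 2 + p 1 ^ 2 ≠ 0)
    (f : (Fin 3 → ℝ) → ℝ)
    (hf : ∀ q, f q = -((q 0 ^ 2 + q 1 ^ 2 + q 2 ^ 2) ^ 2) / (q 0 ^ 2 + q 1 ^ 2)) :
    (fun i => fderiv ℝ f p (Pi.single i 1)) =
      (2 * (p 0 ^ 2 + p 1 ^ 2 + p 2 ^ 2) / (p 0 ^ 2 + p 1 ^ 2) ^ 2) • (I3 p ⨯₃ R3 p) := by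
  have hr := hasFDerivAt_sum_sq Finset.univ p
  have hρ := hasFDerivAt_sum_sq {0, 1} p
  have hf' := (hr.sq_div hρ (by simpa using hp)).neg.congr_of_eventuallyEq
    (.of_forall fun q => by simp [hf q, Fin.sum_univ_three, neg_div] : f =ᶠ[nhds p] _)
  ext i
  rw [hf'.fderiv]
  fin_cases i <;> simp [Fin.sum_univ_three, cross_apply, I3, R3] <;> field_simp <;> ring

/-- the gradient of f = −(x²+y²+z²)²/(x²+y²) is parallel to
E₁ = I₃ × R₃ at every point off the z-axis, i.e. ∇f × E₁ = 0. -/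
theorem stmt16 (p : Fin 3 → ℝ) (hp : p 0 ^ 2 + p 1 ^ 2 ≠ 0)
    (f : (Fin 3 → ℝ) → ℝ)
    (hf : ∀ q, f q = -((q 0 ^ 2 + q 1 ^ 2 + q 2 ^ 2) ^ 2) / (q 0 ^ 2 + q 1 ^ 2))
    (grad : Fin 3 → ℝ) (hgrad : ∀ i, grad i = fderiv ℝ f p (Pi.single i 1)) :
    crossProduct grad (crossProduct (I3 p) (R3 p)) = 0 := by
  obtain rfl : grad = fun i => fderiv ℝ f p (Pi.single i 1) := funext hgrad
  rw [gradient_eq_smul_I3_cross_R3 p hp f hf, LinearMap.map_smul₂, cross_self, smul_zero]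
end
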